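/- If X^(d) = (X_1,…,X_d) has independent components each with density f, then E[(3/4)^{b_d^l(X^(d))}] → exp(−f*·l/2) as d → ∞. -/

import Mathlib

open MeasureTheory Filter Finset

noncomputable section

/-- Normalizing constant `∫_0^1 e^{g(y)} dy`. -/
def normConst (g : ℝ → ℝ) : ℝ := ∫ y in (0:ℝ)..1, Real.exp (g y)

/-- The one-dimensional target density `f(x) = e^{g(x)} 1_{(0,1)}(x) / ∫_0^1 e^{g(y)} dy`. -/
def dens (g : ℝ → ℝ) (x : ℝ) : ℝ :=
  if x ∈ Set.Ioo (0:ℝ) 1 then Real.exp (g x) / normConst g else 0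

/-- The i.i.d. product target density `π_d(x) = ∏_{i=1}^d f(x_i)`. -/
def targetDens (g : ℝ → ℝ) (d : ℕ) (x : Fin d → ℝ) : ℝ := ∏ i, dens g (x i)

/-- `f* = (e^{g(0)} + e^{g(1)}) / (2 ∫_0^1 e^{g(y)} dy)`. -/
def fstar (g : ℝ → ℝ) : ℝ := (Real.exp (g 0) + Real.exp (g 1)) / (2 * normConst g)

open scoped Classical in
/-- `b_d^r(x)`: the number of components of `x` in the rejection region
`(0, r/d) ∪ (1 - r/d, 1)`. -/
def bcount (d : ℕ) (r : ℝ) (x : Fin d → ℝ) : ℕ :=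
  (Finset.univ.filter fun j : Fin d =>
    x j ∈ Set.Ioo (0:ℝ) (r / (d:ℝ)) ∪ Set.Ioo (1 - r / (d:ℝ)) 1).card

open Set


lemma aux_exp_pow (c : ℕ → ℝ) (t : ℝ) (h : Filter.Tendsto (fun d : ℕ => (d:ℝ) * c d) atTop (nhds t))
    (hne : ∀ᶠ d in atTop, c d ≠ 0) :
    Tendsto (fun d : ℕ => (1 + c d) ^ d) atTop (nhds (Real.exp t)) := by
  have hc0 : Tendsto c atTop (nhds 0) := by
    have h1 : Tendsto (fun d : ℕ => ((d:ℝ) * c d) * ((d:ℝ))⁻¹) atTop (nhds (t * 0)) :=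
      h.mul (tendsto_natCast_atTop_atTop.inv_tendsto_atTop)
    rw [mul_zero] at h1
    apply h1.congr'
    filter_upwards [eventually_gt_atTop 0] with d hd
    field_simp
  have hlog : Tendsto (fun d : ℕ => Real.log (1 + c d) / c d) atTop (nhds 1) := by
    have hd : HasDerivAt Real.log 1 1 := by simpa using Real.hasDerivAt_log one_ne_zero
    have hs := hasDerivAt_iff_tendsto_slope.1 hd
    have h1 : Tendsto (fun d : ℕ => 1 + c d) atTop (nhdsWithin 1 {(1:ℝ)}ᶜ) := by
      apply tendsto_nhdsWithin_of_tendsto_nhds_of_eventually_within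
      · simpa using tendsto_const_nhds.add hc0
      · filter_upwards [hne] with d hd
        simp only [Set.mem_compl_iff, Set.mem_singleton_iff]
        intro hcon; apply hd; linarith
    have := hs.comp h1
    apply this.congr
    intro d
    simp [slope_def_field]
  have hpos : ∀ᶠ d : ℕ in atTop, 0 < 1 + c d := by
    have : ∀ᶠ d in atTop, c d ∈ Set.Ioo (-(1:ℝ)/2) (1/2) :=
      hc0 (Ioo_mem_nhds (by norm_num) (by norm_num))
    filter_upwards [this] with d hd
    have := hd.1; linarith
  have hdm : Tendsto (fun d : ℕ => (d:ℝ) * Real.log (1 + c d)) atTop (nhds t) := by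
    have := h.mul hlog
    rw [mul_one] at this
    apply this.congr'
    filter_upwards [hne] with d hd
    field_simp
  have := (Real.continuous_exp.tendsto t).comp hdm
  apply this.congr'
  filter_upwards [hpos] with d hd
  simp only [Function.comp_apply]
  rw [← Real.exp_log hd, ← Real.exp_nat_mul, Real.exp_log hd]

variable {g : ℝ → ℝ} {l : ℝ}

lemma aux_F_limit (hl : 0 < l) (hfc : ContinuousOn (fun x => Real.exp (g x)) (Icc 0 1)) :
    Tendsto (fun d : ℕ => (d:ℝ) * ∫ x in (0:ℝ)..(l/d), Real.exp (g x)) atTop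
      (nhds (l * Real.exp (g 0))) := by
  set f : ℝ → ℝ := fun x => Real.exp (g x) with hf
  set F : ℝ → ℝ := fun t => ∫ x in (0:ℝ)..t, f x with hF
  have hmeas : StronglyMeasurableAtFilter f (nhdsWithin 0 (Ioi 0)) :=
    ⟨Ioo 0 1, Ioo_mem_nhdsGT_of_mem (by norm_num : (0:ℝ) ∈ Ico (0:ℝ) 1),
      ((hfc.mono Ioo_subset_Icc_self).aestronglyMeasurable measurableSet_Ioo)⟩
  have hb : ContinuousWithinAt f (Ioi 0) 0 :=
    (hfc 0 (by constructor <;> norm_num)).mono_of_mem_nhdsWithin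
      (mem_of_superset (Ioo_mem_nhdsGT_of_mem (by norm_num : (0:ℝ) ∈ Ico (0:ℝ) 1))
        Ioo_subset_Icc_self)
  have hder : HasDerivWithinAt F (f 0) (Ici 0) 0 :=
    intervalIntegral.integral_hasDerivWithinAt_right (by simp) hmeas hb
  have hslope := hasDerivWithinAt_iff_tendsto_slope.1 hder
  have hseq : Tendsto (fun d : ℕ => l / (d:ℝ)) atTop (nhdsWithin 0 (Ici 0 \ {0})) := by
    apply tendsto_nhdsWithin_of_tendsto_nhds_of_eventually_within
    · exact tendsto_const_div_atTop_nhds_zero_nat l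
    · filter_upwards [eventually_gt_atTop 0] with d hd
      have : 0 < l / (d:ℝ) := div_pos hl (by exact_mod_cast hd)
      constructor
      · exact le_of_lt this
      · simp [ne_of_gt this]
  have hcomp := hslope.comp hseq
  have h2 : Tendsto (fun k : ℕ => l * (slope F 0 ∘ fun d : ℕ => l / (d:ℝ)) k) atTop
      (nhds (l * Real.exp (g 0))) := by
    simpa [mul_comm] using hcomp.const_mul l
  apply h2.congr'
  filter_upwards [eventually_gt_atTop 0] with d hd
  have hd' : (0:ℝ) < d := by exact_mod_cast hd
  have hld : 0 < l / (d:ℝ) := div_pos hl hd'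
  simp only [Function.comp_apply, slope_def_field]
  have hF0 : F 0 = 0 := intervalIntegral.integral_same
  rw [hF0]
  field_simp
  simp only [mul_zero, sub_zero, mul_div_cancel_right₀ _ hl.ne', hF, mul_div_cancel_left₀ _ hl.ne']

lemma aux_G_limit (hl : 0 < l) (hfc : ContinuousOn (fun x => Real.exp (g x)) (Icc 0 1)) :
    Tendsto (fun d : ℕ => (d:ℝ) * ∫ x in (1 - l/d)..(1:ℝ), Real.exp (g x)) atTop
      (nhds (l * Real.exp (g 1))) := by
  set f : ℝ → ℝ := fun x => Real.exp (g x) with hf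
  set G : ℝ → ℝ := fun t => ∫ x in t..(1:ℝ), f x with hG
  have hmeas : StronglyMeasurableAtFilter f (nhdsWithin 1 (Iic 1)) :=
    ⟨Ioc 0 1, Ioc_mem_nhdsLE_of_mem (by constructor <;> norm_num : (1:ℝ) ∈ Ioc (0:ℝ) 1),
      ((hfc.mono Ioc_subset_Icc_self).aestronglyMeasurable measurableSet_Ioc)⟩
  have hb : ContinuousWithinAt f (Iic 1) 1 :=
    (hfc 1 (by constructor <;> norm_num)).mono_of_mem_nhdsWithin
      (mem_of_superset (Ioc_mem_nhdsLE_of_mem (by constructor <;> norm_num : (1:ℝ) ∈ Ioc (0:ℝ) 1))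
        Ioc_subset_Icc_self)
  have hder0 : HasDerivWithinAt (fun u => ∫ x in (1:ℝ)..u, f x) (f 1) (Iic 1) 1 :=
    intervalIntegral.integral_hasDerivWithinAt_right (by simp) hmeas hb
  have hder : HasDerivWithinAt G (-(f 1)) (Iic 1) 1 := by
    have := hder0.neg
    apply this.congr
    · intro y _; exact intervalIntegral.integral_symm 1 y
    · exact intervalIntegral.integral_symm 1 1
  have hslope := hasDerivWithinAt_iff_tendsto_slope.1 hder
  have hseq : Tendsto (fun d : ℕ => 1 - l / (d:ℝ)) atTop (nhdsWithin 1 (Iic 1 \ {1})) := by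
    apply tendsto_nhdsWithin_of_tendsto_nhds_of_eventually_within
    · have := (tendsto_const_div_atTop_nhds_zero_nat l).const_sub 1
      simpa using this
    · filter_upwards [eventually_gt_atTop 0] with d hd
      have : 0 < l / (d:ℝ) := div_pos hl (by exact_mod_cast hd)
      constructor
      · simp only [Set.mem_Iic]; linarith
      · simp only [Set.mem_singleton_iff]; intro hcon; rw [sub_eq_self] at hcon; linarith
  have hcomp := hslope.comp hseq
  have h2 : Tendsto (fun k : ℕ => (-l) * (slope G 1 ∘ fun d : ℕ => 1 - l / (d:ℝ)) k) atTop
      (nhds (l * Real.exp (g 1))) := by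
    have := hcomp.const_mul (-l)
    have he : (-l) * (-(f 1)) = l * Real.exp (g 1) := by rw [hf]; ring
    rw [mul_comm] at this
    rw [← he]
    convert this using 2
    ring
  apply h2.congr'
  filter_upwards [eventually_gt_atTop 0] with d hd
  have hd' : (0:ℝ) < d := by exact_mod_cast hd
  have hld : 0 < l / (d:ℝ) := div_pos hl hd'
  simp only [Function.comp_apply, slope_def_field]
  have hG1 : G 1 = 0 := intervalIntegral.integral_same
  rw [hG1]
  show -l * ((G (1 - l / (d:ℝ)) - 0) / (1 - l / (d:ℝ) - 1)) = (d:ℝ) * G (1 - l / (d:ℝ))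
  rw [sub_zero, show (1:ℝ) - l/(d:ℝ) - 1 = -(l/(d:ℝ)) by ring, div_neg, mul_neg, neg_mul, neg_neg]
  rw [div_div_eq_mul_div, ← mul_div_assoc]
  rw [mul_comm l _, mul_div_assoc, div_self (ne_of_gt hl), mul_one]
  ring


lemma aux_normConst_pos (g : ℝ → ℝ) (hfc : ContinuousOn (fun x => Real.exp (g x)) (Icc 0 1)) :
    0 < normConst g := by
  have hfi : IntervalIntegrable (fun x => Real.exp (g x)) volume 0 1 :=
    (by rwa [Set.uIcc_of_le zero_le_one] : ContinuousOn _ (Set.uIcc (0:ℝ) 1)).intervalIntegrable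
  exact intervalIntegral.intervalIntegral_pos_of_pos_on hfi (fun x _ => Real.exp_pos _) zero_lt_one

lemma aux_onedim (g : ℝ → ℝ) (l : ℝ) (hl : 0 < l)
    (hfc : ContinuousOn (fun x => Real.exp (g x)) (Icc 0 1)) (d : ℕ) (hd1 : 1 ≤ d)
    (hd2 : 2 * l ≤ (d:ℝ)) :
    ∫ x : ℝ, (if x ∈ Set.Ioo (0:ℝ) (l / (d:ℝ)) ∪ Set.Ioo (1 - l / (d:ℝ)) 1 then (3:ℝ)/4 else 1)
        * dens g x
      = 1 - ((∫ x in (0:ℝ)..(l/(d:ℝ)), Real.exp (g x))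
          + ∫ x in (1 - l/(d:ℝ))..(1:ℝ), Real.exp (g x)) / (4 * normConst g) := by
  have hd' : (0:ℝ) < d := by exact_mod_cast hd1
  have hld : 0 < l / (d:ℝ) := div_pos hl hd'
  have hhalf : l / (d:ℝ) ≤ 1/2 := by rw [div_le_iff₀ hd']; linarith
  have hC : 0 < normConst g := aux_normConst_pos g hfc
  set C := normConst g
  set f : ℝ → ℝ := fun x => Real.exp (g x) with hf
  have hint : IntegrableOn f (Icc 0 1) := hfc.integrableOn_compact isCompact_Icc
  have hdens_eq : dens g = Set.indicator (Ioo 0 1) (fun x => f x / C) := by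
    funext x; simp [_root_.dens, Set.indicator_apply]; rfl
  have hdens_int : Integrable (dens g) := by
    rw [hdens_eq]
    exact (integrable_indicator_iff measurableSet_Ioo).2
      ((hint.mono_set Ioo_subset_Icc_self).div_const _)
  set B : Set ℝ := Set.Ioo (0:ℝ) (l / (d:ℝ)) ∪ Set.Ioo (1 - l / (d:ℝ)) 1 with hB
  have hBmeas : MeasurableSet B := (measurableSet_Ioo).union measurableSet_Ioo
  have hsub1 : Set.Ioo (0:ℝ) (l / (d:ℝ)) ⊆ Set.Ioo 0 1 :=
    Set.Ioo_subset_Ioo le_rfl (by linarith)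
  have hsub2 : Set.Ioo (1 - l / (d:ℝ)) 1 ⊆ Set.Ioo 0 1 :=
    Set.Ioo_subset_Ioo (by linarith) le_rfl
  have hBsub : B ⊆ Set.Ioo 0 1 := Set.union_subset hsub1 hsub2
  have hsplit : ∀ x : ℝ, (if x ∈ B then (3:ℝ)/4 else 1) * dens g x
      = dens g x - (1/4) * Set.indicator B (dens g) x := by
    intro x
    by_cases hx : x ∈ B <;> simp only [Set.indicator_apply, hx, if_true, if_false] <;> ring
  simp only [← hB, hsplit]
  rw [integral_sub hdens_int ((hdens_int.indicator hBmeas).const_mul _),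
    MeasureTheory.integral_const_mul, MeasureTheory.integral_indicator hBmeas]
  have hone : ∫ x : ℝ, dens g x = 1 := by
    rw [hdens_eq, MeasureTheory.integral_indicator measurableSet_Ioo, integral_div]
    have hnc : ∫ x in Set.Ioo (0:ℝ) 1, f x = C := by
      rw [show C = normConst g from rfl, normConst,
        intervalIntegral.integral_of_le zero_le_one, integral_Ioc_eq_integral_Ioo]
    rw [hnc, div_self hC.ne']
  have hBval : ∫ x in B, dens g x
      = ((∫ x in (0:ℝ)..(l/(d:ℝ)), f x) + ∫ x in (1 - l/(d:ℝ))..(1:ℝ), f x) / C := by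
    have hcongr : ∫ x in B, dens g x = ∫ x in B, f x / C := by
      apply setIntegral_congr_fun hBmeas
      intro x hx
      simp [_root_.dens, hBsub hx]; rfl
    rw [hcongr]
    have hdisj : Disjoint (Set.Ioo (0:ℝ) (l / (d:ℝ))) (Set.Ioo (1 - l / (d:ℝ)) 1) := by
      exact (Set.Iic_disjoint_Ioi (by linarith : l / (d:ℝ) ≤ 1 - l / (d:ℝ))).mono
        (fun x hx => le_of_lt hx.2) (fun x hx => hx.1)
    have hint1 : IntegrableOn (fun x => f x / C) (Set.Ioo (0:ℝ) (l / (d:ℝ))) :=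
      (hint.mono_set (hsub1.trans Ioo_subset_Icc_self)).div_const _
    have hint2 : IntegrableOn (fun x => f x / C) (Set.Ioo (1 - l / (d:ℝ)) 1) :=
      (hint.mono_set (hsub2.trans Ioo_subset_Icc_self)).div_const _
    rw [hB, setIntegral_union hdisj measurableSet_Ioo hint1 hint2]
    rw [integral_div, integral_div,
      intervalIntegral.integral_of_le hld.le, integral_Ioc_eq_integral_Ioo,
      intervalIntegral.integral_of_le (by linarith), integral_Ioc_eq_integral_Ioo,
      ← add_div]
  rw [hone, hBval]
  field_simp


open scoped Classical in
lemma aux_prod_eq (g : ℝ → ℝ) (d : ℕ) (l : ℝ) :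
    ∫ x : Fin d → ℝ, ((3:ℝ)/4) ^ (bcount d l x) * targetDens g d x =
      (∫ x : ℝ, (if x ∈ Set.Ioo (0:ℝ) (l / (d:ℝ)) ∪ Set.Ioo (1 - l / (d:ℝ)) 1 then (3:ℝ)/4 else 1)
        * dens g x) ^ d := by
  have hpow := MeasureTheory.integral_fintype_prod_eq_pow (𝕜 := ℝ) (ι := Fin d) (μ := volume)
    (f := fun x : ℝ => (if x ∈ Set.Ioo (0:ℝ) (l / (d:ℝ)) ∪ Set.Ioo (1 - l / (d:ℝ)) 1
      then (3:ℝ)/4 else 1) * dens g x)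
  simp only [Fintype.card_fin] at hpow
  rw [← hpow]
  congr 1
  funext x
  rw [targetDens, bcount, ← Finset.prod_const, Finset.prod_filter, ← Finset.prod_mul_distrib]

/-- In stationarity, `E[(3/4)^{b_d^l(X^{(d)})}] → exp(- f* l / 2)` as `d → ∞`. -/
theorem expectation_three_quarters_pow_bcount (l : ℝ) (hl : 0 < l) (g : ℝ → ℝ)
    (hg : ContDiffOn ℝ 2 g (Set.Icc 0 1)) :
    Tendsto (fun d : ℕ =>
        ∫ x : Fin d → ℝ, ((3:ℝ)/4) ^ (bcount d l x) * targetDens g d x)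
      atTop (nhds (Real.exp (-(fstar g * l / 2)))) := by
  have hfc : ContinuousOn (fun x => Real.exp (g x)) (Set.Icc 0 1) :=
    Real.continuous_exp.comp_continuousOn (hg.continuousOn)
  have hC : 0 < normConst g := aux_normConst_pos g hfc
  set c : ℕ → ℝ := fun d => -(((∫ x in (0:ℝ)..(l/(d:ℝ)), Real.exp (g x))
      + ∫ x in (1 - l/(d:ℝ))..(1:ℝ), Real.exp (g x)) / (4 * normConst g)) with hc
  have hd2l : ∀ᶠ d : ℕ in atTop, 2 * l ≤ (d:ℝ) :=
    (tendsto_natCast_atTop_atTop (R := ℝ)).eventually_ge_atTop (2 * l)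
  have hdc : Tendsto (fun d : ℕ => (d:ℝ) * c d) atTop (nhds (-(fstar g * l / 2))) := by
    have h0 := (((aux_F_limit hl hfc).add (aux_G_limit hl hfc)).div_const
      (4 * normConst g)).neg
    have hval : -((l * Real.exp (g 0) + l * Real.exp (g 1)) / (4 * normConst g))
        = -(fstar g * l / 2) := by
      rw [fstar]
      field_simp
      ring
    rw [hval] at h0
    apply h0.congr
    intro d
    rw [hc]
    ring
  have hne : ∀ᶠ d : ℕ in atTop, c d ≠ 0 := by
    filter_upwards [eventually_ge_atTop 1, hd2l] with d hd1 hd2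
    have hd' : (0:ℝ) < d := by exact_mod_cast hd1
    have hld : 0 < l / (d:ℝ) := div_pos hl hd'
    have hhalf : l / (d:ℝ) ≤ 1/2 := by rw [div_le_iff₀ hd']; linarith
    have hfi : IntervalIntegrable (fun x => Real.exp (g x)) volume 0 (l/(d:ℝ)) := by
      apply ContinuousOn.intervalIntegrable
      rw [Set.uIcc_of_le hld.le]
      exact hfc.mono (Set.Icc_subset_Icc le_rfl (by linarith))
    have hF : 0 < ∫ x in (0:ℝ)..(l/(d:ℝ)), Real.exp (g x) :=
      intervalIntegral.intervalIntegral_pos_of_pos_on hfi (fun x _ => Real.exp_pos _) hld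
    have hG : 0 ≤ ∫ x in (1 - l/(d:ℝ))..(1:ℝ), Real.exp (g x) :=
      intervalIntegral.integral_nonneg (by linarith) (fun u _ => (Real.exp_pos _).le)
    have hq : 0 < ((∫ x in (0:ℝ)..(l/(d:ℝ)), Real.exp (g x))
        + ∫ x in (1 - l/(d:ℝ))..(1:ℝ), Real.exp (g x)) / (4 * normConst g) :=
      div_pos (by linarith) (by linarith)
    rw [hc]
    exact neg_ne_zero.2 (ne_of_gt hq)
  have hmain := aux_exp_pow c _ hdc hne
  apply hmain.congr'
  filter_upwards [eventually_ge_atTop 1, hd2l] with d hd1 hd2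
  rw [aux_prod_eq g d l, aux_onedim g l hl hfc d hd1 hd2, hc, sub_eq_add_neg]
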